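/- Let n ≥ 0 and j, k ∈ ℕ, let P : ℂ^{n+1} → ℂ be a smooth function that is harmonic for the Euclidean Laplacian on ℝ^{2n+2} and satisfies P(λ w) = λ^j λ̄^k P(w) for all λ ∈ ℂ, and let g : (−1, 1) → ℂ be smooth. Define u(w) = g(|w|²) P(w) for |w| < 1. Then for every w in the open unit ball of ℂ^{n+1}: −(1−|w|²) Σ_{a,b=1}^{n+1} (δ_{ab} − w_a w̄_b) ∂_{w_a} ∂_{w̄_b} u (w) = −(1−|w|²) [ |w|² (1−|w|²) g''(|w|²) + ( j+k+n+1 − (j+k+1)|w|² ) g'(|w|²) − j k g(|w|²) ] P(w). -/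

import Mathlib

noncomputable section

open Complex

/-- Directional (real) derivative of F : ℂ^m → ℂ along the constant vector v. -/
def rd {m : ℕ} (v : Fin m → ℂ) (F : (Fin m → ℂ) → ℂ) : (Fin m → ℂ) → ℂ :=
  fun z => fderiv ℝ F z v

/-- The Wirtinger derivative ∂_{z_j} = (1/2)(∂_{u_j} − i ∂_{v_j}). -/
def wd {m : ℕ} (j : Fin m) (F : (Fin m → ℂ) → ℂ) : (Fin m → ℂ) → ℂ :=
  fun z => (1 / 2 : ℂ) * (rd (Pi.single j 1) F z - Complex.I * rd (Pi.single j Complex.I) F z)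

/-- The Wirtinger derivative ∂_{z̄_j} = (1/2)(∂_{u_j} + i ∂_{v_j}). -/
def wdbar {m : ℕ} (j : Fin m) (F : (Fin m → ℂ) → ℂ) : (Fin m → ℂ) → ℂ :=
  fun z => (1 / 2 : ℂ) * (rd (Pi.single j 1) F z + Complex.I * rd (Pi.single j Complex.I) F z)

/-- R = Σ_j z_j ∂_{z_j}. -/
def Rop {m : ℕ} (F : (Fin m → ℂ) → ℂ) : (Fin m → ℂ) → ℂ :=
  fun z => ∑ j, z j * wd j F z

/-- R̄ = Σ_j z̄_j ∂_{z̄_j}. -/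
def Rbarop {m : ℕ} (F : (Fin m → ℂ) → ℂ) : (Fin m → ℂ) → ℂ :=
  fun z => ∑ j, (starRingEnd ℂ) (z j) * wdbar j F z

/-- The second-order part Σ_{j,k} (δ_{jk} − z_j z̄_k) ∂_{z_j} ∂_{z̄_k}. -/
def secOrd {m : ℕ} (F : (Fin m → ℂ) → ℂ) : (Fin m → ℂ) → ℂ :=
  fun z => ∑ j, ∑ k,
    ((if j = k then 1 else 0) - z j * (starRingEnd ℂ) (z k)) * wd j (wdbar k F) z


/-- Second directional derivative along v. -/
def rd2 {m : ℕ} (v : Fin m → ℂ) (F : (Fin m → ℂ) → ℂ) : (Fin m → ℂ) → ℂ :=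
  fun z => rd v (rd v F) z

/-- The Euclidean Laplacian on ℂ^m ≅ ℝ^{2m}: Σ_a (∂²_{u_a} + ∂²_{v_a}). -/
def lapE {m : ℕ} (F : (Fin m → ℂ) → ℂ) : (Fin m → ℂ) → ℂ :=
  fun z => ∑ a, (rd2 (Pi.single a 1) F z + rd2 (Pi.single a Complex.I) F z)

/-! ### Auxiliary lemmas -/

section Aux

variable {m : ℕ}

/- ## Basic `rd` calculus -/

lemma contDiff_rd (v : Fin m → ℂ) {F : (Fin m → ℂ) → ℂ} (hF : ContDiff ℝ (⊤:ℕ∞) F) :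
    ContDiff ℝ (⊤:ℕ∞) (rd v F) :=
  (ContinuousLinearMap.apply ℝ ℂ v).contDiff.comp (hF.fderiv_right (by simp))

lemma contDiff_wd (a : Fin m) {F : (Fin m → ℂ) → ℂ} (hF : ContDiff ℝ (⊤:ℕ∞) F) :
    ContDiff ℝ (⊤:ℕ∞) (wd a F) := by
  unfold wd
  exact contDiff_const.mul ((contDiff_rd _ hF).sub (contDiff_const.mul (contDiff_rd _ hF)))

lemma contDiff_wdbar (a : Fin m) {F : (Fin m → ℂ) → ℂ} (hF : ContDiff ℝ (⊤:ℕ∞) F) :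
    ContDiff ℝ (⊤:ℕ∞) (wdbar a F) := by
  unfold wdbar
  exact contDiff_const.mul ((contDiff_rd _ hF).add (contDiff_const.mul (contDiff_rd _ hF)))

lemma rd_congr {F G : (Fin m → ℂ) → ℂ} {z : Fin m → ℂ} (v : Fin m → ℂ)
    (h : F =ᶠ[nhds z] G) : rd v F z = rd v G z := by
  unfold rd; rw [h.fderiv_eq]

lemma wd_congr {F G : (Fin m → ℂ) → ℂ} {z : Fin m → ℂ} (a : Fin m)
    (h : F =ᶠ[nhds z] G) : wd a F z = wd a G z := by
  unfold wd; rw [rd_congr _ h, rd_congr _ h]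

lemma rd_mul {F G : (Fin m → ℂ) → ℂ} {z : Fin m → ℂ} (v : Fin m → ℂ)
    (hF : DifferentiableAt ℝ F z) (hG : DifferentiableAt ℝ G z) :
    rd v (fun y => F y * G y) z = rd v F z * G z + F z * rd v G z := by
  unfold rd
  rw [fderiv_fun_mul hF hG]
  simp [smul_eq_mul]
  ring

lemma rd_const_mul {F : (Fin m → ℂ) → ℂ} {z : Fin m → ℂ} (v : Fin m → ℂ) (c : ℂ)
    (hF : DifferentiableAt ℝ F z) :
    rd v (fun y => c * F y) z = c * rd v F z := by
  unfold rd
  rw [fderiv_const_mul hF]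
  simp

lemma rd_add {F G : (Fin m → ℂ) → ℂ} {z : Fin m → ℂ} (v : Fin m → ℂ)
    (hF : DifferentiableAt ℝ F z) (hG : DifferentiableAt ℝ G z) :
    rd v (fun y => F y + G y) z = rd v F z + rd v G z := by
  unfold rd
  rw [fderiv_fun_add hF hG]; rfl

lemma rd_sum {ι : Type*} (s : Finset ι) {F : ι → (Fin m → ℂ) → ℂ} {z : Fin m → ℂ}
    (v : Fin m → ℂ) (hF : ∀ i ∈ s, DifferentiableAt ℝ (F i) z) :
    rd v (fun y => ∑ i ∈ s, F i y) z = ∑ i ∈ s, rd v (F i) z := by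
  unfold rd
  rw [fderiv_fun_sum hF]
  simp

lemma wd_mul {F G : (Fin m → ℂ) → ℂ} {z : Fin m → ℂ} (a : Fin m)
    (hF : DifferentiableAt ℝ F z) (hG : DifferentiableAt ℝ G z) :
    wd a (fun y => F y * G y) z = wd a F z * G z + F z * wd a G z := by
  unfold wd
  rw [rd_mul _ hF hG, rd_mul _ hF hG]
  ring

lemma wdbar_mul {F G : (Fin m → ℂ) → ℂ} {z : Fin m → ℂ} (a : Fin m)
    (hF : DifferentiableAt ℝ F z) (hG : DifferentiableAt ℝ G z) :
    wdbar a (fun y => F y * G y) z = wdbar a F z * G z + F z * wdbar a G z := by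
  unfold wdbar
  rw [rd_mul _ hF hG, rd_mul _ hF hG]
  ring

lemma wd_add {F G : (Fin m → ℂ) → ℂ} {z : Fin m → ℂ} (a : Fin m)
    (hF : DifferentiableAt ℝ F z) (hG : DifferentiableAt ℝ G z) :
    wd a (fun y => F y + G y) z = wd a F z + wd a G z := by
  unfold wd
  rw [rd_add _ hF hG, rd_add _ hF hG]
  ring

lemma wd_const_mul {F : (Fin m → ℂ) → ℂ} {z : Fin m → ℂ} (a : Fin m) (c : ℂ)
    (hF : DifferentiableAt ℝ F z) :
    wd a (fun y => c * F y) z = c * wd a F z := by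
  unfold wd
  rw [rd_const_mul _ c hF, rd_const_mul _ c hF]
  ring

lemma wd_sum {ι : Type*} (s : Finset ι) {F : ι → (Fin m → ℂ) → ℂ} {z : Fin m → ℂ}
    (a : Fin m) (hF : ∀ i ∈ s, DifferentiableAt ℝ (F i) z) :
    wd a (fun y => ∑ i ∈ s, F i y) z = ∑ i ∈ s, wd a (F i) z := by
  unfold wd
  rw [rd_sum s _ hF, rd_sum s _ hF, Finset.mul_sum, ← Finset.sum_sub_distrib,
    Finset.mul_sum]

lemma rd_coord (b : Fin m) (v z : Fin m → ℂ) :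
    rd v (fun y => y b) z = v b := by
  unfold rd
  rw [show (fun y : Fin m → ℂ => y b) = (ContinuousLinearMap.proj b : (Fin m → ℂ) →L[ℝ] ℂ)
    from rfl, ContinuousLinearMap.fderiv]
  rfl

lemma rd_conj_coord (b : Fin m) (v z : Fin m → ℂ) :
    rd v (fun y => (starRingEnd ℂ) (y b)) z = (starRingEnd ℂ) (v b) := by
  unfold rd
  rw [show (fun y : Fin m → ℂ => (starRingEnd ℂ) (y b))
      = (Complex.conjCLE.toContinuousLinearMap.comp
          (ContinuousLinearMap.proj b : (Fin m → ℂ) →L[ℝ] ℂ)) from rfl,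
    ContinuousLinearMap.fderiv]
  rfl

lemma wd_coord (a b : Fin m) (z : Fin m → ℂ) :
    wd a (fun y => y b) z = if a = b then 1 else 0 := by
  unfold wd
  rw [rd_coord, rd_coord]
  by_cases h : a = b
  · subst h
    simp [Pi.single_apply, Complex.I_mul_I]
    norm_num
  · simp [Pi.single_apply, Ne.symm h, h]

lemma wd_conj_coord (a b : Fin m) (z : Fin m → ℂ) :
    wd a (fun y => (starRingEnd ℂ) (y b)) z = 0 := by
  unfold wd
  rw [rd_conj_coord, rd_conj_coord]
  by_cases h : a = b
  · subst h
    simp [Pi.single_apply]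
  · simp [Pi.single_apply, Ne.symm h]

/- ## The radial function -/

def rr (z : Fin m → ℂ) : ℝ := ∑ a, ‖z a‖ ^ 2

def rrL (z : Fin m → ℂ) : (Fin m → ℂ) →L[ℝ] ℝ :=
  ∑ a, (2 • (innerSL ℝ (z a)).comp (ContinuousLinearMap.proj a))

lemma hasFDerivAt_rr (z : Fin m → ℂ) : HasFDerivAt rr (rrL z) z := by
  unfold rr rrL
  exact HasFDerivAt.fun_sum fun a _ =>
    (ContinuousLinearMap.proj a : (Fin m → ℂ) →L[ℝ] ℂ).hasFDerivAt.norm_sq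

lemma rrL_single (z : Fin m → ℂ) (b : Fin m) (c : ℂ) :
    rrL z (Pi.single b c) = 2 * ((z b).re * c.re + (z b).im * c.im) := by
  unfold rrL
  rw [ContinuousLinearMap.sum_apply, Finset.sum_eq_single b]
  · simp [two_smul]; ring
  · intro a _ hab
    simp [Pi.single_apply, hab.symm]
  · simp

lemma contDiff_rr : ContDiff ℝ (⊤:ℕ∞) (rr (m := m)) := by
  unfold rr
  exact ContDiff.sum fun a _ =>
    ContDiff.norm_sq ℝ ((ContinuousLinearMap.proj a : (Fin m → ℂ) →L[ℝ] ℂ).contDiff)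

lemma rr_nonneg (z : Fin m → ℂ) : 0 ≤ rr z :=
  Finset.sum_nonneg fun a _ => by positivity

lemma differentiableAt_comp_rr {φ : ℝ → ℂ} {φ' : ℂ} {z : Fin m → ℂ}
    (hφ : HasDerivAt φ φ' (rr z)) :
    DifferentiableAt ℝ (fun y => φ (rr y)) z :=
  ((hφ.hasFDerivAt).comp z (hasFDerivAt_rr z)).differentiableAt

lemma rd_comp_rr {φ : ℝ → ℂ} {φ' : ℂ} {z : Fin m → ℂ} (v : Fin m → ℂ)
    (hφ : HasDerivAt φ φ' (rr z)) :
    rd v (fun y => φ (rr y)) z = φ' * ((rrL z v : ℝ) : ℂ) := by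
  unfold rd
  have h := (hφ.hasFDerivAt).comp z (hasFDerivAt_rr z)
  rw [show (fun y => φ (rr y)) = φ ∘ rr from rfl, h.fderiv]
  simp [mul_comm]

lemma wd_comp_rr {φ : ℝ → ℂ} {φ' : ℂ} {z : Fin m → ℂ} (a : Fin m)
    (hφ : HasDerivAt φ φ' (rr z)) :
    wd a (fun y => φ (rr y)) z = φ' * (starRingEnd ℂ) (z a) := by
  unfold wd
  rw [rd_comp_rr _ hφ, rd_comp_rr _ hφ, rrL_single, rrL_single]
  simp only [Complex.one_re, Complex.one_im, Complex.I_re, Complex.I_im]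
  apply Complex.ext <;> simp [Complex.mul_re, Complex.mul_im] <;> ring

lemma wdbar_comp_rr {φ : ℝ → ℂ} {φ' : ℂ} {z : Fin m → ℂ} (a : Fin m)
    (hφ : HasDerivAt φ φ' (rr z)) :
    wdbar a (fun y => φ (rr y)) z = φ' * z a := by
  unfold wdbar
  rw [rd_comp_rr _ hφ, rd_comp_rr _ hφ, rrL_single, rrL_single]
  simp only [Complex.one_re, Complex.one_im, Complex.I_re, Complex.I_im]
  apply Complex.ext <;> simp [Complex.mul_re, Complex.mul_im] <;> ring

/- ## Decomposition of directional derivatives -/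

lemma vec_decomp (v : Fin m → ℂ) :
    v = ∑ a, ((v a).re • (Pi.single a (1:ℂ) : Fin m → ℂ)
        + (v a).im • (Pi.single a Complex.I : Fin m → ℂ)) := by
  funext b
  rw [Finset.sum_apply]
  rw [Finset.sum_eq_single b]
  · simp [Complex.real_smul, Complex.ext_iff]
  · intro a _ hab
    simp [Pi.single_apply, hab.symm]
  · simp

lemma wd_alg (A B c : ℂ) : ((c.re:ℂ))*A + ((c.im:ℂ))*B
    = (1/2:ℂ)*(A - Complex.I*B)*c + (1/2:ℂ)*(A + Complex.I*B)*(starRingEnd ℂ) c := by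
  apply Complex.ext <;> simp [Complex.mul_re, Complex.mul_im] <;> ring

lemma rd_decomp {F : (Fin m → ℂ) → ℂ} {z : Fin m → ℂ} (v : Fin m → ℂ) :
    rd v F z = ∑ a, (((v a).re : ℂ) * rd (Pi.single a 1) F z
      + ((v a).im : ℂ) * rd (Pi.single a Complex.I) F z) := by
  unfold rd
  conv_lhs => rw [vec_decomp v]
  rw [map_sum]
  refine Finset.sum_congr rfl fun a _ => ?_
  rw [map_add, (fderiv ℝ F z).map_smul, (fderiv ℝ F z).map_smul]
  simp [Complex.real_smul]

lemma rd_as_wd {F : (Fin m → ℂ) → ℂ} {z : Fin m → ℂ} (v : Fin m → ℂ) :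
    rd v F z = ∑ a, (wd a F z * v a + wdbar a F z * (starRingEnd ℂ) (v a)) := by
  rw [rd_decomp v]
  refine Finset.sum_congr rfl fun a _ => ?_
  unfold wd wdbar
  exact wd_alg _ _ _

/- ## Symmetry of second derivatives -/

lemma rd_rd_symm {P : (Fin m → ℂ) → ℂ} (hP : ContDiff ℝ (⊤:ℕ∞) P) (v w z : Fin m → ℂ) :
    rd v (rd w P) z = rd w (rd v P) z := by
  have hd1 : Differentiable ℝ P := hP.differentiable (by simp)
  have hfd : ContDiff ℝ (⊤:ℕ∞) (fderiv ℝ P) := hP.fderiv_right (by simp)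
  have hD : HasFDerivAt (fderiv ℝ P) (fderiv ℝ (fderiv ℝ P) z) z :=
    (hfd.differentiable (by simp)).differentiableAt.hasFDerivAt
  have hsymm := second_derivative_symmetric (f := P) (f' := fderiv ℝ P)
    (fun y => (hd1 y).hasFDerivAt) hD v w
  have key : ∀ u₁ u₂ : Fin m → ℂ, rd u₁ (rd u₂ P) z = (fderiv ℝ (fderiv ℝ P) z u₁) u₂ := by
    intro u₁ u₂
    unfold rd
    have hcomp := ((ContinuousLinearMap.apply ℝ ℂ u₂).hasFDerivAt.comp z hD).fderiv
    rw [show (fun y => fderiv ℝ P y u₂)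
        = ⇑(ContinuousLinearMap.apply ℝ ℂ u₂) ∘ (fderiv ℝ P) from rfl, hcomp]
    rfl
  rw [key, key]
  exact hsymm

/-- wd a (wdbar a P) is a quarter of the a-th Laplacian piece. -/
lemma wd_wdbar_diag {P : (Fin m → ℂ) → ℂ} (hP : ContDiff ℝ (⊤:ℕ∞) P) (a : Fin m)
    (z : Fin m → ℂ) :
    wd a (wdbar a P) z
      = (1/4 : ℂ) * (rd2 (Pi.single a 1) P z + rd2 (Pi.single a Complex.I) P z) := by
  set e : Fin m → ℂ := Pi.single a 1
  set f : Fin m → ℂ := Pi.single a Complex.I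
  have hde : DifferentiableAt ℝ (rd e P) z :=
    ((contDiff_rd e hP).differentiable (by simp)).differentiableAt
  have hdf : DifferentiableAt ℝ (rd f P) z :=
    ((contDiff_rd f hP).differentiable (by simp)).differentiableAt
  have hsum : ∀ v : Fin m → ℂ,
      rd v (wdbar a P) z = (1/2:ℂ) * (rd v (rd e P) z + Complex.I * rd v (rd f P) z) := by
    intro v
    have : wdbar a P = fun y => (1/2:ℂ) * (rd e P y + Complex.I * rd f P y) := rfl
    rw [this, rd_const_mul _ _ (by
      exact (hde.add (hdf.const_mul Complex.I)) ),
      rd_add _ hde (hdf.const_mul _), rd_const_mul _ _ hdf]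
  unfold wd
  rw [hsum e, hsum f]
  rw [rd_rd_symm hP e f z]
  unfold rd2
  ring_nf
  rw [Complex.I_sq]
  ring

lemma trace_zero {P : (Fin m → ℂ) → ℂ} (hP : ContDiff ℝ (⊤:ℕ∞) P)
    (hharm : ∀ z, lapE P z = 0) (z : Fin m → ℂ) :
    ∑ a, wd a (wdbar a P) z = 0 := by
  have h := hharm z
  unfold lapE at h
  calc ∑ a, wd a (wdbar a P) z
      = ∑ a, (1/4 : ℂ) * (rd2 (Pi.single a 1) P z + rd2 (Pi.single a Complex.I) P z) :=
        Finset.sum_congr rfl fun a _ => wd_wdbar_diag hP a z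
    _ = (1/4 : ℂ) * ∑ a, (rd2 (Pi.single a 1) P z + rd2 (Pi.single a Complex.I) P z) := by
        rw [Finset.mul_sum]
    _ = 0 := by rw [h, mul_zero]

/- ## Euler identities from homogeneity -/

lemma euler_real (P : (Fin m → ℂ) → ℂ) (hP : Differentiable ℝ P) (z : Fin m → ℂ) (J : ℕ)
    (hh : ∀ t : ℝ, P (fun a => (t:ℂ) * z a) = (t:ℂ)^J * P z) :
    fderiv ℝ P z z = (J : ℂ) * P z := by
  have hc : HasDerivAt (fun t : ℝ => t • z) ((1:ℝ) • z) 1 := (hasDerivAt_id 1).smul_const z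
  have h1 : HasDerivAt (fun t : ℝ => P (t • z)) (fderiv ℝ P ((1:ℝ) • z) ((1:ℝ) • z)) 1 :=
    (hP.differentiableAt.hasFDerivAt).comp_hasDerivAt 1 hc
  have h2 : HasDerivAt (fun t : ℝ => ((t:ℂ))^J * P z) ((J:ℂ) * P z) 1 := by
    have := ((hasDerivAt_pow J ((1:ℝ):ℂ)).comp_ofReal).mul_const (P z)
    simpa using this
  have heq : (fun t : ℝ => P (t • z)) = (fun t : ℝ => ((t:ℂ))^J * P z) := by
    funext t
    rw [show (t • z : Fin m → ℂ) = fun a => (t:ℂ) * z a from by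
      funext a; simp [Complex.real_smul]]
    exact hh t
  rw [heq] at h1
  have h3 := h1.unique h2
  rw [one_smul] at h3
  exact h3

lemma euler_circle (P : (Fin m → ℂ) → ℂ) (hP : Differentiable ℝ P) (z : Fin m → ℂ) (c : ℂ)
    (hh : ∀ θ : ℝ, P (fun a => Complex.exp ((θ:ℂ) * Complex.I) * z a)
       = Complex.exp (c * ((θ:ℂ) * Complex.I)) * P z) :
    fderiv ℝ P z (fun a => Complex.I * z a) = c * Complex.I * P z := by
  have hφ : HasDerivAt (fun θ : ℝ => Complex.exp ((θ:ℂ) * Complex.I)) Complex.I 0 := by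
    have := (((hasDerivAt_id ((0:ℝ):ℂ)).mul_const Complex.I).cexp).comp_ofReal
    simpa using this
  have hc : HasDerivAt (fun θ : ℝ => (fun a => Complex.exp ((θ:ℂ) * Complex.I) * z a : Fin m → ℂ))
      (Complex.I • z) 0 := hφ.smul_const z
  have h1 : HasDerivAt (fun θ : ℝ => P (fun a => Complex.exp ((θ:ℂ) * Complex.I) * z a))
      (fderiv ℝ P (fun a => Complex.exp (((0:ℝ):ℂ) * Complex.I) * z a) (Complex.I • z)) 0 :=
    (hP.differentiableAt.hasFDerivAt).comp_hasDerivAt 0 hc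
  have h2 : HasDerivAt (fun θ : ℝ => Complex.exp (c * ((θ:ℂ) * Complex.I)) * P z)
      (c * Complex.I * P z) 0 := by
    have := ((((hasDerivAt_id ((0:ℝ):ℂ)).mul_const Complex.I).const_mul c).cexp.comp_ofReal).mul_const (P z)
    simpa using this
  have heq : (fun θ : ℝ => P (fun a => Complex.exp ((θ:ℂ) * Complex.I) * z a))
      = (fun θ : ℝ => Complex.exp (c * ((θ:ℂ) * Complex.I)) * P z) := funext hh
  rw [heq] at h1
  have h3 := h1.unique h2
  rw [show (fun a => Complex.exp (((0:ℝ):ℂ) * Complex.I) * z a) = z from by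
    funext a; simp] at h3
  rw [← h3]
  congr 1

end Aux


/- ## Euler operator identities -/

lemma euler_ops {m : ℕ} {P : (Fin m → ℂ) → ℂ} (hP : ContDiff ℝ (⊤:ℕ∞) P) {j k : ℕ}
    (hhom : ∀ (lam : ℂ) (w : Fin m → ℂ),
      P (fun a => lam * w a) = lam ^ j * (starRingEnd ℂ) lam ^ k * P w) (z : Fin m → ℂ) :
    (∑ a, wd a P z * z a) = (j:ℂ) * P z ∧ (∑ a, wdbar a P z * (starRingEnd ℂ) (z a)) = (k:ℂ) * P z := by
  have hPd : Differentiable ℝ P := hP.differentiable (by simp)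
  set A := ∑ a, wd a P z * z a with hA
  set B := ∑ a, wdbar a P z * (starRingEnd ℂ) (z a) with hB
  have h1 : A + B = ((j:ℂ) + k) * P z := by
    have hr := euler_real P hPd z (j + k) (fun t => by
      rw [hhom (t:ℂ) z, Complex.conj_ofReal, pow_add])
    have hd : rd z P z = ∑ a, (wd a P z * z a + wdbar a P z * (starRingEnd ℂ) (z a)) :=
      rd_as_wd z
    unfold rd at hd
    rw [hr] at hd
    rw [Finset.sum_add_distrib] at hd
    rw [hA, hB, ← hd]
    push_cast
    ring
  have h2 : A - B = ((j:ℂ) - k) * P z := by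
    have hcirc := euler_circle P hPd z ((j:ℂ) - (k:ℂ)) (fun θ => by
      rw [hhom (Complex.exp ((θ:ℂ) * Complex.I)) z]
      congr 1
      rw [← Complex.exp_conj, map_mul, Complex.conj_ofReal, Complex.conj_I,
        ← Complex.exp_nat_mul, ← Complex.exp_nat_mul, ← Complex.exp_add]
      ring_nf)
    have hd : rd (fun a => Complex.I * z a) P z
        = ∑ a, (wd a P z * (Complex.I * z a)
            + wdbar a P z * (starRingEnd ℂ) (Complex.I * z a)) :=
      rd_as_wd _
    unfold rd at hd
    rw [hcirc] at hd
    have hsimp : ∀ a : Fin m, wd a P z * (Complex.I * z a)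
        + wdbar a P z * (starRingEnd ℂ) (Complex.I * z a)
        = Complex.I * (wd a P z * z a) - Complex.I * (wdbar a P z * (starRingEnd ℂ) (z a)) := by
      intro a
      rw [map_mul, Complex.conj_I]
      ring
    rw [Finset.sum_congr rfl (fun a _ => hsimp a)] at hd
    have hIB : Complex.I * (A - B)
        = ∑ a, (Complex.I * (wd a P z * z a)
            - Complex.I * (wdbar a P z * (starRingEnd ℂ) (z a))) := by
      rw [hA, hB, ← Finset.sum_sub_distrib, Finset.mul_sum]
      exact Finset.sum_congr rfl fun a _ => by ring
    have hfin : Complex.I * (A - B) = Complex.I * (((j:ℂ) - k) * P z) := by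
      rw [hIB, ← hd]; ring
    exact mul_left_cancel₀ Complex.I_ne_zero hfin
  constructor
  · linear_combination (h1 + h2) / 2
  · linear_combination (h1 - h2) / 2

/-- Pointwise mixed second-order identity: Σ_b z̄_b ∂_a ∂̄_b P = k ∂_a P. -/
lemma euler_mixed {m : ℕ} {P : (Fin m → ℂ) → ℂ} (hP : ContDiff ℝ (⊤:ℕ∞) P) {j k : ℕ}
    (hhom : ∀ (lam : ℂ) (w : Fin m → ℂ),
      P (fun a => lam * w a) = lam ^ j * (starRingEnd ℂ) lam ^ k * P w)
    (a : Fin m) (z : Fin m → ℂ) :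
    ∑ b, (starRingEnd ℂ) (z b) * wd a (wdbar b P) z = (k:ℂ) * wd a P z := by
  have hPd : Differentiable ℝ P := hP.differentiable (by simp)
  have hfun : (fun y => ∑ b, (starRingEnd ℂ) (y b) * wdbar b P y)
      = (fun y => (k:ℂ) * P y) := by
    funext y
    have := (euler_ops hP hhom y).2
    rw [← this]
    exact Finset.sum_congr rfl fun b _ => by ring
  have hconj : ∀ b : Fin m, DifferentiableAt ℝ (fun y : Fin m → ℂ => (starRingEnd ℂ) (y b)) z :=
    fun b => by
      exact (Complex.conjCLE.toContinuousLinearMap.comp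
        (ContinuousLinearMap.proj b : (Fin m → ℂ) →L[ℝ] ℂ)).differentiableAt
  have hwb : ∀ b : Fin m, DifferentiableAt ℝ (wdbar b P) z :=
    fun b => ((contDiff_wdbar b hP).differentiable (by simp)).differentiableAt
  have hL : wd a (fun y => ∑ b, (starRingEnd ℂ) (y b) * wdbar b P y) z
      = ∑ b, (starRingEnd ℂ) (z b) * wd a (wdbar b P) z := by
    rw [wd_sum Finset.univ a (fun b _ => (hconj b).fun_mul (hwb b))]
    refine Finset.sum_congr rfl fun b _ => ?_
    rw [wd_mul a (hconj b) (hwb b), wd_conj_coord]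
    ring
  have hR : wd a (fun y => (k:ℂ) * P y) z = (k:ℂ) * wd a P z :=
    wd_const_mul a _ hPd.differentiableAt
  rw [← hL, hfun, hR]


/- ## Abstract summation lemma -/

lemma final_sum {m : ℕ} (wv cv wdP wbP : Fin m → ℂ) (M : Fin m → Fin m → ℂ)
    (d1 d2 g0 Pw ρ jj kk : ℂ)
    (hρ : ∑ a, wv a * cv a = ρ)
    (hF1 : ∑ a, wdP a * wv a = jj * Pw)
    (hF2 : ∑ b, wbP b * cv b = kk * Pw)
    (hF3 : ∑ a, M a a = 0)
    (hF4 : ∀ a, ∑ b, cv b * M a b = kk * wdP a) :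
    ∑ a, ∑ b, ((if a = b then (1:ℂ) else 0) - wv a * cv b)
        * (d2 * cv a * (wv b * Pw)
            + d1 * ((if a = b then (1:ℂ) else 0) * Pw + wv b * wdP a)
            + d1 * cv a * wbP b + g0 * M a b)
      = (ρ * (1 - ρ) * d2 + ((jj + kk + m) - (jj + kk + 1) * ρ) * d1 - jj * kk * g0) * Pw := by
  set E : Fin m → Fin m → ℂ := fun a b =>
    d2 * cv a * (wv b * Pw)
      + d1 * ((if a = b then (1:ℂ) else 0) * Pw + wv b * wdP a)
      + d1 * cv a * wbP b + g0 * M a b with hE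
  have stepA : ∀ a, ∑ b, ((if a = b then (1:ℂ) else 0) - wv a * cv b) * E a b
      = E a a - wv a * ∑ b, cv b * E a b := by
    intro a
    have h1 : ∀ b, ((if a = b then (1:ℂ) else 0) - wv a * cv b) * E a b
        = (if a = b then E a b else 0) - wv a * (cv b * E a b) := fun b => by
      by_cases h : a = b <;> simp [h] <;> ring
    rw [Finset.sum_congr rfl fun b _ => h1 b, Finset.sum_sub_distrib, Finset.sum_ite_eq,
      ← Finset.mul_sum]
    simp
  have stepB : ∀ a, ∑ b, cv b * E a b
      = d2 * cv a * (ρ * Pw) + d1 * (cv a * Pw + ρ * wdP a)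
        + d1 * cv a * (kk * Pw) + g0 * (kk * wdP a) := by
    intro a
    have expand : ∀ b, cv b * E a b
        = (d2 * cv a * Pw + d1 * wdP a) * (wv b * cv b)
          + (d1 * Pw) * (if a = b then cv b else 0)
          + (d1 * cv a) * (wbP b * cv b)
          + g0 * (cv b * M a b) := fun b => by
      by_cases h : a = b
      · subst h; simp [hE]; ring
      · simp [hE, h]; ring
    rw [Finset.sum_congr rfl fun b _ => expand b]
    rw [Finset.sum_add_distrib, Finset.sum_add_distrib, Finset.sum_add_distrib,
      ← Finset.mul_sum, ← Finset.mul_sum, ← Finset.mul_sum, ← Finset.mul_sum]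
    rw [hρ, hF2, hF4 a, Finset.sum_ite_eq]
    simp
    ring
  have stepC : ∀ a, E a a - wv a * ∑ b, cv b * E a b
      = (d2 * Pw - d1 * Pw - kk * d1 * Pw - ρ * d2 * Pw) * (wv a * cv a)
        + d1 * Pw
        + (d1 - ρ * d1 - g0 * kk) * (wdP a * wv a)
        + d1 * (wbP a * cv a)
        + g0 * M a a := by
    intro a
    rw [stepB a]
    simp only [hE, eq_self_iff_true, if_true]
    ring
  calc ∑ a, ∑ b, ((if a = b then (1:ℂ) else 0) - wv a * cv b) * E a b
      = ∑ a, ((d2 * Pw - d1 * Pw - kk * d1 * Pw - ρ * d2 * Pw) * (wv a * cv a)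
          + d1 * Pw
          + (d1 - ρ * d1 - g0 * kk) * (wdP a * wv a)
          + d1 * (wbP a * cv a)
          + g0 * M a a) := by
        refine Finset.sum_congr rfl fun a _ => ?_
        rw [stepA a, stepC a]
    _ = (ρ * (1 - ρ) * d2 + ((jj + kk + m) - (jj + kk + 1) * ρ) * d1 - jj * kk * g0) * Pw := by
        rw [Finset.sum_add_distrib, Finset.sum_add_distrib, Finset.sum_add_distrib,
          Finset.sum_add_distrib, ← Finset.mul_sum, ← Finset.mul_sum, ← Finset.mul_sum,
          ← Finset.mul_sum, ← Finset.mul_sum, hρ, hF1, hF2, hF3, Finset.sum_const,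
          Finset.card_univ, Fintype.card_fin, nsmul_eq_mul]
        ring

theorem stmt10 (n : ℕ) (j k : ℕ) (P : (Fin (n + 1) → ℂ) → ℂ)
    (hP : ContDiff ℝ (⊤ : ℕ∞) P)
    (hharm : ∀ z, lapE P z = 0)
    (hhom : ∀ (lam : ℂ) (w : Fin (n + 1) → ℂ),
      P (fun a => lam * w a) = lam ^ j * (starRingEnd ℂ) lam ^ k * P w)
    (g : ℝ → ℂ) (hg : ContDiffOn ℝ (⊤ : ℕ∞) g (Set.Ioo (-1 : ℝ) 1)) :
    ∀ w : Fin (n + 1) → ℂ, (∑ a, ‖w a‖ ^ 2) < 1 →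
      -(((1 - ∑ a, ‖w a‖ ^ 2 : ℝ)) : ℂ) *
          secOrd (fun v => g (∑ a, ‖v a‖ ^ 2) * P v) w
        = -(((1 - ∑ a, ‖w a‖ ^ 2 : ℝ)) : ℂ) *
            (((∑ a, ‖w a‖ ^ 2 : ℝ) : ℂ) * ((1 - ∑ a, ‖w a‖ ^ 2 : ℝ) : ℂ) *
                deriv (deriv g) (∑ a, ‖w a‖ ^ 2)
              + (((j : ℂ) + k + n + 1)
                  - ((j : ℂ) + k + 1) * ((∑ a, ‖w a‖ ^ 2 : ℝ) : ℂ)) *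
                deriv g (∑ a, ‖w a‖ ^ 2)
              - (j : ℂ) * (k : ℂ) * g (∑ a, ‖w a‖ ^ 2)) * P w := by
  intro w hw
  rw [show (∑ a, ‖w a‖ ^ 2 : ℝ) = rr w from rfl] at *
  have hP' : ContDiff ℝ (⊤:ℕ∞) P := hP.of_le (by simp)
  have hPd : Differentiable ℝ P := hP'.differentiable (by simp)
  have hg' : ContDiffOn ℝ (⊤:ℕ∞) g (Set.Ioo (-1:ℝ) 1) := hg.of_le (by simp)
  have hdg : ContDiffOn ℝ (⊤:ℕ∞) (deriv g) (Set.Ioo (-1:ℝ) 1) :=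
    hg.deriv_of_isOpen isOpen_Ioo (by simp)
  have hBopen : IsOpen {z : Fin (n+1) → ℂ | rr z < 1} :=
    isOpen_lt contDiff_rr.continuous continuous_const
  have hwB : w ∈ {z : Fin (n+1) → ℂ | rr z < 1} := hw
  have hmem : ∀ z ∈ {z : Fin (n+1) → ℂ | rr z < 1}, rr z ∈ Set.Ioo (-1:ℝ) 1 := fun z hz =>
    ⟨lt_of_lt_of_le (by norm_num) (rr_nonneg z), hz⟩
  have hgD : ∀ z ∈ {z : Fin (n+1) → ℂ | rr z < 1}, HasDerivAt g (deriv g (rr z)) (rr z) :=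
    fun z hz =>
      ((hg'.contDiffAt (isOpen_Ioo.mem_nhds (hmem z hz))).differentiableAt (by simp)).hasDerivAt
  have hdgD : ∀ z ∈ {z : Fin (n+1) → ℂ | rr z < 1},
      HasDerivAt (deriv g) (deriv (deriv g) (rr z)) (rr z) := fun z hz =>
    ((hdg.contDiffAt (isOpen_Ioo.mem_nhds (hmem z hz))).differentiableAt (by simp)).hasDerivAt
  -- Step 1: first Wirtinger derivative of u on the ball
  have step1 : ∀ b : Fin (n+1), ∀ z ∈ {z : Fin (n+1) → ℂ | rr z < 1},
      wdbar b (fun v => g (∑ a, ‖v a‖ ^ 2) * P v) z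
        = deriv g (rr z) * (z b * P z) + g (rr z) * wdbar b P z := by
    intro b z hz
    rw [show (fun v : Fin (n+1) → ℂ => g (∑ a, ‖v a‖ ^ 2) * P v)
        = (fun v => g (rr v) * P v) from rfl]
    rw [wdbar_mul b (differentiableAt_comp_rr (hgD z hz)) hPd.differentiableAt,
      wdbar_comp_rr b (hgD z hz)]
    ring
  -- differentiability facts at w
  have Ddg : DifferentiableAt ℝ (fun y : Fin (n+1) → ℂ => deriv g (rr y)) w :=
    differentiableAt_comp_rr (hdgD w hwB)
  have Dg : DifferentiableAt ℝ (fun y : Fin (n+1) → ℂ => g (rr y)) w :=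
    differentiableAt_comp_rr (hgD w hwB)
  have Dcoord : ∀ b : Fin (n+1), DifferentiableAt ℝ (fun y : Fin (n+1) → ℂ => y b) w :=
    fun b => by exact (ContinuousLinearMap.proj b : (Fin (n+1) → ℂ) →L[ℝ] ℂ).differentiableAt
  have Dwb : ∀ b : Fin (n+1), DifferentiableAt ℝ (wdbar b P) w :=
    fun b => ((contDiff_wdbar b hP').differentiable (by simp)).differentiableAt
  -- Step 2+3: the second Wirtinger derivatives of u at w
  have key : ∀ a b : Fin (n+1), wd a (wdbar b (fun v => g (∑ a, ‖v a‖ ^ 2) * P v)) w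
      = deriv (deriv g) (rr w) * (starRingEnd ℂ) (w a) * (w b * P w)
        + deriv g (rr w) * ((if a = b then (1:ℂ) else 0) * P w + w b * wd a P w)
        + deriv g (rr w) * (starRingEnd ℂ) (w a) * wdbar b P w
        + g (rr w) * wd a (wdbar b P) w := by
    intro a b
    have hcongr : wdbar b (fun v => g (∑ a, ‖v a‖ ^ 2) * P v)
        =ᶠ[nhds w] (fun z => deriv g (rr z) * (z b * P z) + g (rr z) * wdbar b P z) :=
      Filter.eventuallyEq_of_mem (hBopen.mem_nhds hwB) (fun z hz => step1 b z hz)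
    rw [wd_congr a hcongr]
    rw [wd_add a (Ddg.fun_mul ((Dcoord b).fun_mul hPd.differentiableAt)) (Dg.fun_mul (Dwb b))]
    rw [wd_mul a Ddg ((Dcoord b).fun_mul hPd.differentiableAt), wd_mul a Dg (Dwb b),
      wd_mul a (Dcoord b) hPd.differentiableAt, wd_coord,
      wd_comp_rr a (hdgD w hwB), wd_comp_rr a (hgD w hwB)]
    ring
  -- the homogeneity identities
  have hρ : ∑ a, w a * (starRingEnd ℂ) (w a) = ((rr w : ℝ) : ℂ) := by
    have h1 : ∀ a, w a * (starRingEnd ℂ) (w a) = ((‖w a‖^2 : ℝ) : ℂ) := fun a => by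
      rw [Complex.mul_conj]
      norm_cast
      simp [Complex.normSq_eq_norm_sq]
    rw [Finset.sum_congr rfl fun a _ => h1 a,
      show rr w = ∑ a, ‖w a‖ ^ 2 from rfl]
    push_cast
    rfl
  have hF1 : ∑ a, wd a P w * w a = (j:ℂ) * P w := (euler_ops hP' hhom w).1
  have hF2 : ∑ b, wdbar b P w * (starRingEnd ℂ) (w b) = (k:ℂ) * P w := (euler_ops hP' hhom w).2
  have hF3 : ∑ a, wd a (wdbar a P) w = 0 := trace_zero hP' hharm w
  have hF4 : ∀ a, ∑ b, (starRingEnd ℂ) (w b) * wd a (wdbar b P) w = (k:ℂ) * wd a P w :=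
    fun a => euler_mixed hP' hhom a w
  -- main computation
  have main : secOrd (fun v => g (∑ a, ‖v a‖ ^ 2) * P v) w
      = (((rr w:ℝ):ℂ) * (1 - ((rr w:ℝ):ℂ)) * deriv (deriv g) (rr w)
          + (((j:ℂ) + (k:ℂ) + (n+1:ℕ)) - ((j:ℂ) + (k:ℂ) + 1) * ((rr w:ℝ):ℂ)) * deriv g (rr w)
          - (j:ℂ) * (k:ℂ) * g (rr w)) * P w := by
    unfold secOrd
    rw [Finset.sum_congr rfl fun a _ => Finset.sum_congr rfl fun b _ => by rw [key a b]]
    exact final_sum w (fun a => (starRingEnd ℂ) (w a)) (fun a => wd a P w)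
      (fun b => wdbar b P w) (fun a b => wd a (wdbar b P) w)
      (deriv g (rr w)) (deriv (deriv g) (rr w)) (g (rr w)) (P w) ((rr w:ℝ):ℂ) (j:ℂ) (k:ℂ)
      hρ hF1 hF2 hF3 hF4
  rw [main]
  push_cast
  ring

end
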